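/- Let q ≥ 2 and let f ∈ L²(ℝ₊^q) be mirror symmetric with ‖f‖ = 1, and let F = I_q(f) be the corresponding Wigner integral. Then E[F⁴] = 2 + Σ_{r=1}^{q−1} ‖f ⌢_r f‖²_{L²(ℝ₊^{2q−2r})}. -/

import Mathlib

open MeasureTheory

noncomputable section

/-- Lebesgue measure on `ℝ₊ⁿ`, represented as a measure on `Fin n → ℝ`. -/
def mPos (n : ℕ) : Measure (Fin n → ℝ) :=
  Measure.pi fun _ => volume.restrict (Set.Ici (0 : ℝ))

/-- Extension of a finite tuple by zeros. -/
def ext0 {n : ℕ} (t : Fin n → ℝ) : ℕ → ℝ := fun i => if h : i < n then t ⟨i, h⟩ else 0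

/-- A kernel in `q` variables is represented as a function on infinite tuples
that depends only on the first `q` coordinates. -/
def KernelDependsOn (q : ℕ) (f : (ℕ → ℝ) → ℝ) : Prop :=
  ∀ s t : ℕ → ℝ, (∀ i < q, s i = t i) → f s = f t

/-- `f`, a kernel in `q` variables, belongs to `L²(ℝ₊^q)`. -/
def InL2 (q : ℕ) (f : (ℕ → ℝ) → ℝ) : Prop :=
  MemLp (fun t : Fin q → ℝ => f (ext0 t)) 2 (mPos q)

/-- The inner product of two kernels in `n` variables, in `L²(ℝ₊ⁿ)`. -/
def ip (n : ℕ) (f g : (ℕ → ℝ) → ℝ) : ℝ :=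
  ∫ t : Fin n → ℝ, f (ext0 t) * g (ext0 t) ∂ mPos n

/-- The `r`-th contraction `f ⌢_r g` of a kernel `f` in `p` variables with a kernel `g`:
the last `r` arguments of `f` are integrated against the first `r` arguments of `g`
(in reversed order).  If `g` has `q` variables, the result has `p + q - 2r` variables. -/
def contr (p r : ℕ) (f g : (ℕ → ℝ) → ℝ) : (ℕ → ℝ) → ℝ :=
  fun t => ∫ x : Fin r → ℝ,
    f (fun i => if i < p - r then t i else ext0 x (i - (p - r))) *
    g (fun j => if j < r then ext0 x (r - 1 - j) else t (j - r + (p - r)))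
    ∂ mPos r

/-- The adjoint (mirror) `f*` of a kernel in `q` variables. -/
def mirror (q : ℕ) (f : (ℕ → ℝ) → ℝ) : (ℕ → ℝ) → ℝ :=
  fun t => f (fun i => if i < q then t (q - 1 - i) else t i)

/-- A kernel in `q` variables is mirror symmetric if `f = f*` a.e. on `ℝ₊^q`. -/
def MirrorSymm (q : ℕ) (f : (ℕ → ℝ) → ℝ) : Prop :=
  ∀ᵐ t ∂ mPos q, f (ext0 t) = mirror q f (ext0 t)

end

/-! Squaring the multiplication formula gives `F² = Σ_r I_{2q-2r}(f ⌢_r f)`, so by orthogonality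
of Wigner chaoses of different orders and the isometry, `E[F⁴] = Σ_r ⟨(f ⌢_r f)*, f ⌢_r f⟩`.
Mirroring reverses a contraction, `(f ⌢_r g)* = g* ⌢_r f*`, and contractions respect a.e.
equality of kernels, so mirror symmetry of `f` turns each term into `‖f ⌢_r f‖²`. The extreme
terms are `‖f ⊗ f‖² = ‖f‖⁴ = 1` for `r = 0` and `⟨f, f*⟩² = ‖f‖⁴ = 1` for `r = q`. -/

instance mPos.sigmaFinite (n : ℕ) : SigmaFinite (mPos n) := by
  unfold mPos; infer_instance

theorem MeasureTheory.quasiMeasurePreserving_comp_of_injective {ι κ α : Type*} [Fintype ι]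
    [Fintype κ] [MeasurableSpace α] (ν : Measure α) [SigmaFinite ν] {σ : ι → κ}
    (hσ : Function.Injective σ) :
    Measure.QuasiMeasurePreserving (fun u : κ → α => u ∘ σ)
      (Measure.pi fun _ => ν) (Measure.pi fun _ => ν) := by
  classical
  let e := MeasurableEquiv.piCongrLeft (fun _ => α) (Equiv.ofInjective σ hσ)
  have hfactor : (fun u : κ → α => u ∘ σ) =
      e.symm ∘ Prod.fst ∘ MeasurableEquiv.piEquivPiSubtypeProd (fun _ => α) (· ∈ Set.range σ) := by
    funext u
    refine (e.symm_apply_eq.2 (funext fun j => ?_)).symm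
    obtain ⟨_, i, rfl⟩ := j
    exact (MeasurableEquiv.piCongrLeft_apply_apply (β := fun _ => α) _ (u ∘ σ) i).symm
  have hsub := measurePreserving_piEquivPiSubtypeProd (fun _ : κ => ν) (· ∈ Set.range σ)
  -- the instance `hsub` was stated with, not `Set.fintypeRange`
  let _ : Fintype (Set.range σ) := Subtype.fintype _
  have hrange := measurePreserving_piCongrLeft (fun _ => ν) (Equiv.ofInjective σ hσ)
  rw [hfactor]
  exact (hrange.symm.quasiMeasurePreserving.comp
    Measure.quasiMeasurePreserving_fst).comp hsub.quasiMeasurePreserving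

theorem integral_mPos_zero (h : (Fin 0 → ℝ) → ℝ) : ∫ x, h x ∂ mPos 0 = h 0 := by
  rw [mPos, Measure.pi_of_empty _ 0, integral_dirac]

theorem integral_mPos_add (p q : ℕ) (h : (Fin (p + q) → ℝ) → ℝ) :
    ∫ t, h t ∂ mPos (p + q) = ∫ x, h (Fin.append x.1 x.2) ∂ (mPos p).prod (mPos q) := by
  let e := (MeasurableEquiv.sumPiEquivProdPi fun _ : Fin p ⊕ Fin q => ℝ).symm.trans
    (MeasurableEquiv.piCongrLeft (fun _ => ℝ) finSumFinEquiv)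
  have he : ∀ x, e x = Fin.append x.1 x.2 := by
    intro x
    funext k
    refine Fin.addCases (fun i => ?_) (fun j => ?_) k
    · rw [Fin.append_left, ← finSumFinEquiv_apply_left]
      exact MeasurableEquiv.piCongrLeft_apply_apply (β := fun _ => ℝ) _ _ (Sum.inl i)
    · rw [Fin.append_right, ← finSumFinEquiv_apply_right]
      exact MeasurableEquiv.piCongrLeft_apply_apply (β := fun _ => ℝ) _ _ (Sum.inr j)
  have hmp : MeasurePreserving e ((mPos p).prod (mPos q)) (mPos (p + q)) :=
    (measurePreserving_piCongrLeft (fun _ => volume.restrict (Set.Ici (0 : ℝ)))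
      finSumFinEquiv).comp
      (measurePreserving_sumPiEquivProdPi_symm fun _ => volume.restrict (Set.Ici (0 : ℝ)))
  simp only [← hmp.integral_comp', he]

theorem ae_mPos_prod_comp_sumElim {q m k : ℕ} {σ : Fin q → Fin m ⊕ Fin k}
    (hσ : Function.Injective σ) {P : (Fin q → ℝ) → Prop} (hP : ∀ᵐ u ∂ mPos q, P u) :
    ∀ᵐ x ∂ (mPos m).prod (mPos k), P (Sum.elim x.1 x.2 ∘ σ) :=
  ((quasiMeasurePreserving_comp_of_injective _ hσ).comp
    (measurePreserving_sumPiEquivProdPi_symm fun _ => _).quasiMeasurePreserving).ae hP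

theorem ext0_of_lt {n : ℕ} (t : Fin n → ℝ) {i : ℕ} (hi : i < n) : ext0 t i = t ⟨i, hi⟩ :=
  dif_pos hi

theorem ext0_fin_zero (t : Fin 0 → ℝ) : ext0 t = 0 :=
  funext fun i => dif_neg i.not_lt_zero

theorem ip_zero (f g : (ℕ → ℝ) → ℝ) : ip 0 f g = f 0 * g 0 := by
  rw [ip, integral_mPos_zero, ext0_fin_zero]

theorem KernelDependsOn.apply_eq_ext0 {q : ℕ} {f : (ℕ → ℝ) → ℝ} (hf : KernelDependsOn q f)
    {s : ℕ → ℝ} {a : Fin q → ℝ} (h : ∀ i : Fin q, s i = a i) : f s = f (ext0 a) :=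
  hf _ _ fun i hi => (ext0_of_lt a hi).symm ▸ h ⟨i, hi⟩

theorem KernelDependsOn.mirror {q : ℕ} {f : (ℕ → ℝ) → ℝ} (hf : KernelDependsOn q f) :
    KernelDependsOn q (mirror q f) :=
  fun s t hst => hf _ _ fun i hi => by simp only [if_pos hi]; exact hst _ (by omega)

section Contraction

variable {p q r : ℕ} {f g : (ℕ → ℝ) → ℝ}

/-- Where the arguments of `f` (`contrSlotLeft`) and of `g` (`contrSlotRight`) sit in the integrand
of `contr p r f g`, as positions among its free variables `t` and integrated variables `x`. -/
def contrSlotLeft (hrq : r ≤ q) : Fin p → Fin (p + q - 2 * r) ⊕ Fin r :=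
  fun i => if h : (i : ℕ) < p - r then .inl ⟨i, by omega⟩ else .inr ⟨i - (p - r), by omega⟩

def contrSlotRight (hrp : r ≤ p) : Fin q → Fin (p + q - 2 * r) ⊕ Fin r :=
  fun j => if h : (j : ℕ) < r then .inr ⟨r - 1 - j, by omega⟩
    else .inl ⟨j - r + (p - r), by omega⟩

theorem contrSlotLeft_injective (hrq : r ≤ q) :
    Function.Injective (contrSlotLeft (p := p) hrq) := by
  intro i j h
  simp only [contrSlotLeft] at h
  split_ifs at h <;> simp only [Sum.inl.injEq, Sum.inr.injEq, Fin.mk.injEq] at h <;>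
    omega

theorem contrSlotRight_injective (hrp : r ≤ p) :
    Function.Injective (contrSlotRight (q := q) hrp) := by
  intro i j h
  simp only [contrSlotRight] at h
  split_ifs at h <;> simp only [Sum.inl.injEq, Sum.inr.injEq, Fin.mk.injEq] at h <;>
    omega

theorem apply_contrSlotLeft (hrq : r ≤ q) (hf : KernelDependsOn p f)
    (t : Fin (p + q - 2 * r) → ℝ) (x : Fin r → ℝ) :
    f (fun i => if i < p - r then ext0 t i else ext0 x (i - (p - r)))
      = f (ext0 (Sum.elim t x ∘ contrSlotLeft hrq)) :=
  hf.apply_eq_ext0 fun i => by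
    simp only [Function.comp_apply, contrSlotLeft]
    split_ifs <;> exact ext0_of_lt _ (by omega)

theorem apply_contrSlotRight (hrp : r ≤ p) (hg : KernelDependsOn q g)
    (t : Fin (p + q - 2 * r) → ℝ) (x : Fin r → ℝ) :
    g (fun j => if j < r then ext0 x (r - 1 - j) else ext0 t (j - r + (p - r)))
      = g (ext0 (Sum.elim t x ∘ contrSlotRight hrp)) :=
  hg.apply_eq_ext0 fun j => by
    simp only [Function.comp_apply, contrSlotRight]
    split_ifs <;> exact ext0_of_lt _ (by omega)

theorem contr_ae_congr (hrp : r ≤ p) (hrq : r ≤ q) {f' g' : (ℕ → ℝ) → ℝ}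
    (hf : KernelDependsOn p f) (hf' : KernelDependsOn p f')
    (hg : KernelDependsOn q g) (hg' : KernelDependsOn q g')
    (hff' : ∀ᵐ u ∂ mPos p, f (ext0 u) = f' (ext0 u))
    (hgg' : ∀ᵐ u ∂ mPos q, g (ext0 u) = g' (ext0 u)) :
    ∀ᵐ t ∂ mPos (p + q - 2 * r), contr p r f g (ext0 t) = contr p r f' g' (ext0 t) := by
  have hslots := Measure.ae_ae_of_ae_prod
    ((ae_mPos_prod_comp_sumElim (contrSlotLeft_injective hrq) hff').and
      (ae_mPos_prod_comp_sumElim (contrSlotRight_injective hrp) hgg'))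
  filter_upwards [hslots] with t ht
  refine integral_congr_ae ?_
  filter_upwards [ht] with x ⟨hfx, hgx⟩
  rw [apply_contrSlotLeft hrq hf, apply_contrSlotLeft hrq hf', apply_contrSlotRight hrp hg,
    apply_contrSlotRight hrp hg', hfx, hgx]

theorem mirror_contr (hrp : r ≤ p) (hrq : r ≤ q) (hf : KernelDependsOn p f)
    (hg : KernelDependsOn q g) (t : ℕ → ℝ) :
    mirror (p + q - 2 * r) (contr p r f g) t = contr q r (mirror q g) (mirror p f) t := by
  refine integral_congr_ae (.of_forall fun x => ?_)
  beta_reduce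
  rw [mul_comm (f _)]
  congr 1
  · refine hg _ _ fun j hj => ?_
    simp only [if_pos hj]
    split_ifs <;> first | (exfalso; omega) | (congr 1; omega)
  · refine hf _ _ fun i hi => ?_
    simp only [if_pos hi]
    split_ifs <;> first | (exfalso; omega) | (congr 1; omega)

theorem contr_zero_ext0_append (hf : KernelDependsOn p f) (hg : KernelDependsOn q g)
    (a : Fin p → ℝ) (b : Fin q → ℝ) :
    contr p 0 f g (ext0 (Fin.append a b)) = f (ext0 a) * g (ext0 b) := by
  rw [contr, integral_mPos_zero]
  congr 1
  · refine hf.apply_eq_ext0 fun i => ?_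
    rw [if_pos (by omega), ext0_of_lt _ (by omega)]
    exact Fin.append_left a b i
  · refine hg.apply_eq_ext0 fun j => ?_
    rw [if_neg (by omega), ext0_of_lt _ (by omega)]
    convert Fin.append_right a b j using 2
    ext
    simp only [Fin.natAdd, Fin.val_mk]
    omega

theorem ip_contr_zero_self (hf : KernelDependsOn p f) (hg : KernelDependsOn q g) :
    ip (p + q - 2 * 0) (contr p 0 f g) (contr p 0 f g) = ip p f f * ip q g g := by
  rw [Nat.mul_zero, Nat.sub_zero, ip, integral_mPos_add]
  simp only [contr_zero_ext0_append hf hg]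
  rw [ip, ip, ← integral_prod_mul]
  congr 1
  funext x
  ring

theorem contr_full_eq_ip_mirror (hg : KernelDependsOn q g) (t : ℕ → ℝ) :
    contr q q f g t = ip q f (mirror q g) := by
  refine integral_congr_ae (.of_forall fun x => ?_)
  beta_reduce
  congr 1
  · congr 1
    funext i
    simp
  · exact hg _ _ fun j hj => by simp only [if_pos hj]

theorem ip_contr_full_self (hf : KernelDependsOn q f) (hmir : MirrorSymm q f) :
    ip (q + q - 2 * q) (contr q q f f) (contr q q f f) = ip q f f ^ 2 := by
  have hmirror : ip q f (mirror q f) = ip q f f :=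
    integral_congr_ae (hmir.mono fun u hu => by simp only [← hu])
  rw [show q + q - 2 * q = 0 by omega, ip_zero, contr_full_eq_ip_mirror hf, hmirror, sq]

theorem ip_mirror_contr_self (hr : r ≤ q) (hf : KernelDependsOn q f)
    (hmir : MirrorSymm q f) :
    ip (q + q - 2 * r) (mirror (q + q - 2 * r) (contr q r f f)) (contr q r f f)
      = ip (q + q - 2 * r) (contr q r f f) (contr q r f f) := by
  have hmir' := hmir.mono fun _ h => h.symm
  refine integral_congr_ae ?_
  filter_upwards [contr_ae_congr hr hr hf.mirror hf hf.mirror hf hmir' hmir'] with t ht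
  rw [mirror_contr hr hr hf hf, ht]

end Contraction

theorem moment_four_eq_sum_ip {A : Type*} [Ring A] [Module ℝ A]
    (E : A →ₗ[ℝ] ℝ) (I : ℕ → ((ℕ → ℝ) → ℝ) → A)
    (hmul : ∀ p q (f g : (ℕ → ℝ) → ℝ),
      I p f * I q g = ∑ r ∈ Finset.range (min p q + 1), I (p + q - 2*r) (contr p r f g))
    (hiso : ∀ q (f g : (ℕ → ℝ) → ℝ), E (I q f * I q g) = ip q (mirror q f) g)
    (horth : ∀ p q (f g : (ℕ → ℝ) → ℝ), p ≠ q → E (I p f * I q g) = 0)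
    (q : ℕ) (f : (ℕ → ℝ) → ℝ) :
    E (I q f ^ 4) = ∑ r ∈ Finset.range (q + 1),
      ip (q + q - 2 * r) (mirror (q + q - 2 * r) (contr q r f f)) (contr q r f f) := by
  have hsq := hmul q q f f
  rw [min_self] at hsq
  rw [show I q f ^ 4 = I q f * I q f * (I q f * I q f) by noncomm_ring, hsq,
    Finset.sum_mul_sum, map_sum]
  refine Finset.sum_congr rfl fun r hr => ?_
  rw [map_sum, Finset.sum_eq_single r (fun s hs hsr => horth _ _ _ _ ?_) (by simp [hr]), hiso]
  simp only [Finset.mem_range] at hr hs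
  omega

theorem stmt14_general {A : Type*} [Ring A] [Algebra ℝ A]
    (E : A →ₗ[ℝ] ℝ) (I : ℕ → ((ℕ → ℝ) → ℝ) → A)
    (hmul : ∀ p q (f g : (ℕ → ℝ) → ℝ),
      I p f * I q g = ∑ r ∈ Finset.range (min p q + 1), I (p + q - 2*r) (contr p r f g))
    (hiso : ∀ q (f g : (ℕ → ℝ) → ℝ), E (I q f * I q g) = ip q (mirror q f) g)
    (horth : ∀ p q (f g : (ℕ → ℝ) → ℝ), p ≠ q → E (I p f * I q g) = 0)
    (q : ℕ) (hq : 2 ≤ q) (f : (ℕ → ℝ) → ℝ)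
    (hdep : KernelDependsOn q f) (hmir : MirrorSymm q f)
    (hnorm : ip q f f = 1) :
    E ((I q f) ^ 4)
      = 2 + ∑ r ∈ Finset.Icc 1 (q-1), ip (2*q-2*r) (contr q r f f) (contr q r f f) := by
  have hIco : Finset.Ico 1 q = Finset.Icc 1 (q - 1) := by
    ext r
    simp only [Finset.mem_Ico, Finset.mem_Icc]
    omega
  rw [moment_four_eq_sum_ip E I hmul hiso horth,
    Finset.sum_congr rfl fun r hr =>
      ip_mirror_contr_self (Nat.lt_succ_iff.mp (Finset.mem_range.mp hr)) hdep hmir,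
    Finset.sum_range_succ, Finset.range_eq_Ico, Finset.sum_eq_sum_Ico_succ_bot (by omega),
    ip_contr_zero_self hdep hdep, ip_contr_full_self hdep hmir, hnorm, hIco, two_mul q]
  ring

/-- For `q ≥ 2` and a mirror-symmetric unit-norm `f ∈ L²(ℝ₊^q)`, the fourth moment of the
Wigner integral `F = I_q(f)` satisfies `E[F⁴] = 2 + Σ_{r=1}^{q-1} ‖f ⌢_r f‖²`.
The Wigner integrals are axiomatized by: the multiplication formula, the isometry
`E[I_q(f)* I_q(g)] = ⟨f*, g⟩`, orthogonality of different orders, centeredness, and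
`I_0` of a constant kernel being that constant. -/
theorem stmt14 {A : Type*} [Ring A] [Algebra ℝ A]
    (E : A →ₗ[ℝ] ℝ) (I : ℕ → ((ℕ → ℝ) → ℝ) → A)
    (hE1 : E 1 = 1)
    (hmul : ∀ p q (f g : (ℕ → ℝ) → ℝ),
      I p f * I q g = ∑ r ∈ Finset.range (min p q + 1), I (p + q - 2*r) (contr p r f g))
    (hiso : ∀ q (f g : (ℕ → ℝ) → ℝ), E (I q f * I q g) = ip q (mirror q f) g)
    (horth : ∀ p q (f g : (ℕ → ℝ) → ℝ), p ≠ q → E (I p f * I q g) = 0)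
    (hcen : ∀ q (f : (ℕ → ℝ) → ℝ), 1 ≤ q → E (I q f) = 0)
    (hzero : ∀ f : (ℕ → ℝ) → ℝ, I 0 f = f (fun _ => 0) • (1 : A))
    (q : ℕ) (hq : 2 ≤ q) (f : (ℕ → ℝ) → ℝ)
    (hdep : KernelDependsOn q f) (hf : InL2 q f) (hmir : MirrorSymm q f)
    (hnorm : ip q f f = 1) :
    E ((I q f) ^ 4)
      = 2 + ∑ r ∈ Finset.Icc 1 (q-1), ip (2*q-2*r) (contr q r f f) (contr q r f f) :=
  stmt14_general E I hmul hiso horth q hq f hdep hmir hnorm
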